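/- arXiv:1701.04724 — 2 statements merged into one kernel-verified Lean document; each statement's English description precedes it below -/
import Mathlib

section
/- Let z_1, …, z_N be independent standard Gaussian random variables, a, b ∈ ℝ^N, and y = Σ_{j=1}^N (a_j z_j² + b_j z_j). Then for every η > 0, the lower tail satisfies P( y − E{y} ≤ −η ) ≤ exp( − (η²/8) / ( (‖a‖₂² + (1/2)‖b‖₂²) + ‖a‖_∞ η ) ). -/
/-!
Each centred summand `a z² + b z - a` is sub-gamma on the left tail: its moment generating
function at `-t` is `(1 + 2ta)^(-1/2) exp(ta + t²b²/(2(1 + 2ta)))`, which the bound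
`log (1 + x) ≥ x - x²/(1 - |x|)` turns into `exp(t²(4a² + b²)/(2(1 - 2|a|t)))`. Variance factors
add up over independent coordinates, and the Chernoff bound then gives Bernstein's inequality
`exp(-η²/(2(v + cη)))`, here with `v = 4(‖a‖₂² + ‖b‖₂²/2)` and `c = 4‖a‖_∞`.
-/

open MeasureTheory ProbabilityTheory Real

theorem integral_exp_neg_mul_sq_add_mul {p : ℝ} (hp : 0 < p) (u : ℝ) :
    ∫ x, rexp (-p * x ^ 2 + u * x) = √(π / p) * rexp (u ^ 2 / (4 * p)) := by
  have hsq (x : ℝ) : rexp (-p * x ^ 2 + u * x) =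
      rexp (-p * (x - u / (2 * p)) ^ 2) * rexp (u ^ 2 / (4 * p)) := by
    rw [← Real.exp_add]; congr 1; field_simp; ring
  simp_rw [hsq, integral_mul_const, integral_sub_right_eq_self (fun x => rexp (-p * x ^ 2)),
    integral_gaussian]

theorem integral_exp_quadratic_gaussianReal {s : ℝ} (hs : s < 1 / 2) (u : ℝ) :
    ∫ x, rexp (s * x ^ 2 + u * x) ∂gaussianReal 0 1 =
      (√(1 - 2 * s))⁻¹ * rexp (u ^ 2 / (2 * (1 - 2 * s))) := by
  have hp : 0 < 1 / 2 - s := by linarith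
  have h2 : 0 < 1 - 2 * s := by linarith
  have hdens (x : ℝ) : gaussianPDFReal 0 1 x • rexp (s * x ^ 2 + u * x) =
      (√(2 * π))⁻¹ * rexp (-(1 / 2 - s) * x ^ 2 + u * x) := by
    rw [gaussianPDFReal, smul_eq_mul, mul_assoc, ← Real.exp_add]
    congr 2
    · simp
    · push_cast; ring
  simp_rw [integral_gaussianReal_eq_integral_smul one_ne_zero, hdens, integral_const_mul,
    integral_exp_neg_mul_sq_add_mul hp]
  rw [show π / (1 / 2 - s) = 2 * π / (1 - 2 * s) by field_simp, Real.sqrt_div' _ h2.le,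
    show u ^ 2 / (4 * (1 / 2 - s)) = u ^ 2 / (2 * (1 - 2 * s)) by ring_nf]
  have : 0 < √(2 * π) := by positivity
  field_simp

theorem integrable_exp_quadratic_gaussianReal {s : ℝ} (hs : s < 1 / 2) (u : ℝ) :
    Integrable (fun x => rexp (s * x ^ 2 + u * x)) (gaussianReal 0 1) := by
  have h2 : 0 < 1 - 2 * s := by linarith
  refine .of_integral_ne_zero ?_
  rw [integral_exp_quadratic_gaussianReal hs]
  positivity

theorem integral_sq_gaussianReal (v : NNReal) : ∫ x, x ^ 2 ∂gaussianReal 0 v = v := by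
  simpa [variance_eq_integral measurable_id'.aemeasurable] using
    variance_fun_id_gaussianReal (μ := 0) (v := v)

theorem integrable_sq_gaussianReal : Integrable (fun x : ℝ => x ^ 2) (gaussianReal 0 1) :=
  (memLp_id_gaussianReal 2).integrable_sq

theorem integrable_id_gaussianReal : Integrable (fun x : ℝ => x) (gaussianReal 0 1) :=
  (memLp_id_gaussianReal 1).integrable le_rfl

theorem integrable_quadratic_gaussianReal (a b : ℝ) :
    Integrable (fun x => a * x ^ 2 + b * x) (gaussianReal 0 1) :=
  (integrable_sq_gaussianReal.const_mul a).add (integrable_id_gaussianReal.const_mul b)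

theorem integral_quadratic_gaussianReal (a b : ℝ) :
    ∫ x, (a * x ^ 2 + b * x) ∂gaussianReal 0 1 = a := by
  rw [integral_add (integrable_sq_gaussianReal.const_mul a)
      (integrable_id_gaussianReal.const_mul b),
    integral_const_mul, integral_const_mul, integral_sq_gaussianReal, integral_id_gaussianReal]
  simp

section Pi

variable {ι : Type*} [Fintype ι] {Ω : ι → Type*} [∀ i, MeasurableSpace (Ω i)]
  {μ : ∀ i, Measure (Ω i)}

theorem integral_sum_comp_eval [∀ i, IsProbabilityMeasure (μ i)] {f : ∀ i, Ω i → ℝ}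
    (hf : ∀ i, Integrable (f i) (μ i)) :
    ∫ ω, ∑ i, f i (ω i) ∂Measure.pi μ = ∑ i, ∫ x, f i x ∂μ i := by
  rw [integral_finsetSum _ fun i _ => integrable_comp_eval (hf i)]
  exact Finset.sum_congr rfl fun i _ => integral_comp_eval (hf i).aestronglyMeasurable

theorem mgf_sum_pi [∀ i, SigmaFinite (μ i)] (X : ∀ i, Ω i → ℝ) (t : ℝ) :
    mgf (fun ω => ∑ i, X i (ω i)) (Measure.pi μ) t = ∏ i, mgf (X i) (μ i) t := by
  simp only [mgf, Finset.mul_sum, Real.exp_sum]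
  exact integral_fintype_prod_eq_prod (fun i x => rexp (t * X i x))

end Pi

theorem inv_sqrt_one_add_le_exp {x : ℝ} (hx : |x| < 1) :
    (√(1 + x))⁻¹ ≤ rexp (-x / 2 + x ^ 2 / (2 * (1 - |x|))) := by
  have hpos : 0 < 1 + x := by linarith [neg_abs_le x]
  have hlog : x - x ^ 2 / (1 - |x|) ≤ log (1 + x) := by
    have h := abs_log_sub_add_sum_range_le (x := -x) (by rwa [abs_neg]) 1
    simp only [Finset.sum_range_one, abs_neg, sub_neg_eq_add] at h
    norm_num at h
    linarith [(abs_le.mp h).1]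
  rw [Real.sqrt_eq_rpow, ← Real.rpow_neg hpos.le, Real.rpow_def_of_pos hpos]
  gcongr
  have : x ^ 2 / (2 * (1 - |x|)) = x ^ 2 / (1 - |x|) / 2 := by rw [div_div, mul_comm]
  linarith

section SubGamma

variable {Ω : Type*} [MeasurableSpace Ω] {X : Ω → ℝ} {μ : Measure Ω} {v c : ℝ}

/-- For centred `X`, the sub-gamma condition on the left tail with variance factor `v` and scale
`c` (Boucheron–Lugosi–Massart, §2.4), together with the integrability the Chernoff bound needs. -/
def IsSubGammaLeft (X : Ω → ℝ) (μ : Measure Ω) (v c : ℝ) : Prop :=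
  ∀ t, 0 < t → c * t < 1 →
    Integrable (fun ω => rexp (-t * X ω)) μ ∧ mgf X μ (-t) ≤ rexp (t ^ 2 * v / (2 * (1 - c * t)))

theorem IsSubGammaLeft.mono {v' c' : ℝ} (h : IsSubGammaLeft X μ v c) (hv : 0 ≤ v)
    (hvv' : v ≤ v') (hcc' : c ≤ c') : IsSubGammaLeft X μ v' c' := by
  intro t ht hct
  have hct' : c * t ≤ c' * t := by gcongr
  obtain ⟨hint, hmgf⟩ := h t ht (hct'.trans_lt hct)
  refine ⟨hint, hmgf.trans ?_⟩
  gcongr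
  exact mul_nonneg (sq_nonneg t) (hv.trans hvv')

theorem IsSubGammaLeft.measureReal_le [IsProbabilityMeasure μ] {η : ℝ}
    (h : IsSubGammaLeft X μ v c) (hv : 0 ≤ v) (hc : 0 ≤ c) (hη : 0 < η) :
    μ.real {ω | X ω ≤ -η} ≤ rexp (-η ^ 2 / (2 * (v + c * η))) := by
  rcases (add_nonneg hv (mul_nonneg hc hη.le)).eq_or_lt with hD | hD
  · -- the right-hand side is `exp (-η² / 0) = 1`
    simp [← hD]
  -- Bernstein's choice `η / (v + cη)` needs `v > 0`; this one gives the same exponent.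
  set t := η / (v + 2 * c * η) with ht_def
  have hD' : 0 < v + 2 * c * η := by nlinarith
  have ht : 0 < t := by positivity
  have hct : c * t < 1 := by
    rw [ht_def, mul_div_assoc', div_lt_one hD']; nlinarith
  obtain ⟨hint, hmgf⟩ := h t ht hct
  calc μ.real {ω | X ω ≤ -η}
      ≤ rexp (-(-t) * -η) * mgf X μ (-t) := measure_le_le_exp_mul_mgf _ (by linarith) hint
    _ ≤ rexp (-(-t) * -η) * rexp (t ^ 2 * v / (2 * (1 - c * t))) := by gcongr
    _ = rexp (-η ^ 2 / (2 * (v + c * η))) := by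
      rw [← Real.exp_add, ht_def]
      congr 1
      generalize hDdef : v + 2 * c * η = D at hD'
      generalize hwdef : v + c * η = w at hD
      have h1 : 1 - c * (η / D) = w / D := by field_simp; linarith
      rw [h1]
      field_simp
      linear_combination 2 * hwdef - hDdef

end SubGamma

theorem IsSubGammaLeft.sum_pi {ι : Type*} [Fintype ι] {Ω : ι → Type*}
    [∀ i, MeasurableSpace (Ω i)] {μ : ∀ i, Measure (Ω i)} [∀ i, SigmaFinite (μ i)]
    {X : ∀ i, Ω i → ℝ} {v : ι → ℝ} {c : ℝ} (h : ∀ i, IsSubGammaLeft (X i) (μ i) (v i) c) :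
    IsSubGammaLeft (fun ω => ∑ i, X i (ω i)) (Measure.pi μ) (∑ i, v i) c := by
  intro t ht hct
  choose hint hmgf using fun i => h i t ht hct
  refine ⟨?_, ?_⟩
  · simp only [Finset.mul_sum, Real.exp_sum]
    exact Integrable.fintype_prod_dep hint
  · rw [mgf_sum_pi, Finset.mul_sum, Finset.sum_div, Real.exp_sum]
    exact Finset.prod_le_prod (fun i _ => mgf_nonneg) fun i _ => hmgf i

theorem isSubGammaLeft_quadratic_gaussianReal (a b : ℝ) :
    IsSubGammaLeft (fun x => a * x ^ 2 + b * x - a) (gaussianReal 0 1) (4 * a ^ 2 + b ^ 2)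
      (2 * |a|) := by
  intro t ht hct
  have hs : -t * a < 1 / 2 := by nlinarith [neg_abs_le a]
  have hexp (x : ℝ) : rexp (-t * (a * x ^ 2 + b * x - a)) =
      rexp (-t * a * x ^ 2 + -t * b * x) * rexp (t * a) := by
    rw [← Real.exp_add]; ring_nf
  refine ⟨?_, ?_⟩
  · simp only [hexp]
    exact (integrable_exp_quadratic_gaussianReal hs _).mul_const _
  have hx : |2 * t * a| = 2 * |a| * t := by
    rw [abs_mul, abs_mul, abs_two, abs_of_pos ht]; ring
  have hr : 0 < 1 - 2 * |a| * t := by linarith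
  have hb : (-t * b) ^ 2 / (2 * (1 + 2 * t * a)) ≤ t ^ 2 * b ^ 2 / (2 * (1 - 2 * |a| * t)) := by
    rw [neg_mul, neg_sq, mul_pow]
    gcongr
    nlinarith [neg_abs_le a]
  calc mgf (fun x => a * x ^ 2 + b * x - a) (gaussianReal 0 1) (-t)
      = (√(1 + 2 * t * a))⁻¹ * rexp ((-t * b) ^ 2 / (2 * (1 + 2 * t * a))) * rexp (t * a) := by
        simp only [mgf, hexp, integral_mul_const, integral_exp_quadratic_gaussianReal hs]
        ring_nf
    _ ≤ rexp (-(2 * t * a) / 2 + (2 * t * a) ^ 2 / (2 * (1 - |2 * t * a|))) *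
          rexp (t ^ 2 * b ^ 2 / (2 * (1 - 2 * |a| * t))) * rexp (t * a) := by
        gcongr
        exact inv_sqrt_one_add_le_exp (hx ▸ hct)
    _ = rexp (t ^ 2 * (4 * a ^ 2 + b ^ 2) / (2 * (1 - 2 * |a| * t))) := by
        rw [hx, ← Real.exp_add, ← Real.exp_add]
        congr 1
        field_simp
        ring

theorem gaussian_quadratic_lower_tail_general
    (N : ℕ) (a b : Fin N → ℝ) (η : ℝ) (hη : 0 < η) :
    (Measure.pi fun _ : Fin N => gaussianReal 0 1)
      {z | (∑ j, (a j * z j ^ 2 + b j * z j)) -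
          ∫ w, (∑ j, (a j * w j ^ 2 + b j * w j))
            ∂(Measure.pi fun _ : Fin N => gaussianReal 0 1) ≤ -η}
      ≤ ENNReal.ofReal (Real.exp (-(η ^ 2 / 8) /
          (((∑ j, a j ^ 2) + (1 / 2) * ∑ j, b j ^ 2) + (⨆ j, |a j|) * η))) := by
  set L := ⨆ j, |a j|
  have hL : ∀ j, |a j| ≤ L := le_ciSup (Finite.bddAbove_range _)
  have hL0 : 0 ≤ L := Real.iSup_nonneg fun j => abs_nonneg _
  have hsub : IsSubGammaLeft (fun z => ∑ j, (a j * z j ^ 2 + b j * z j - a j))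
      (Measure.pi fun _ : Fin N => gaussianReal 0 1)
      (4 * ((∑ j, a j ^ 2) + (1 / 2) * ∑ j, b j ^ 2)) (4 * L) := by
    refine (IsSubGammaLeft.sum_pi fun j => (isSubGammaLeft_quadratic_gaussianReal (a j) (b j)).mono
      (c' := 2 * L) (by positivity) le_rfl (by linarith [hL j])).mono (by positivity) ?_
      (by linarith)
    rw [Finset.sum_add_distrib, ← Finset.mul_sum]
    linarith [Finset.sum_nonneg fun j (_ : j ∈ Finset.univ) => sq_nonneg (b j)]
  rw [integral_sum_comp_eval fun j => integrable_quadratic_gaussianReal (a j) (b j)]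
  simp only [integral_quadratic_gaussianReal, ← Finset.sum_sub_distrib]
  rw [← ofReal_measureReal]
  refine ENNReal.ofReal_le_ofReal
    ((hsub.measureReal_le (by positivity) (by positivity) hη).trans_eq ?_)
  rw [mul_assoc 4 L η, ← mul_add]
  generalize (∑ j, a j ^ 2) + 1 / 2 * ∑ j, b j ^ 2 + L * η = D
  congr 1
  ring

/-- Lower-tail concentration for Gaussian quadratic forms:
`P(y - E y ≤ -η) ≤ exp(-(η²/8) / ((‖a‖₂² + (1/2)‖b‖₂²) + ‖a‖_∞ η))`. -/
theorem gaussian_quadratic_lower_tail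
    (N : ℕ) (hN : 0 < N) (a b : Fin N → ℝ) (η : ℝ) (hη : 0 < η) :
    (Measure.pi fun _ : Fin N => gaussianReal 0 1)
      {z | (∑ j, (a j * z j ^ 2 + b j * z j)) -
          ∫ w, (∑ j, (a j * w j ^ 2 + b j * w j))
            ∂(Measure.pi fun _ : Fin N => gaussianReal 0 1) ≤ -η}
      ≤ ENNReal.ofReal (Real.exp (-(η ^ 2 / 8) /
          (((∑ j, a j ^ 2) + (1 / 2) * ∑ j, b j ^ 2) + (⨆ j, |a j|) * η))) :=
  gaussian_quadratic_lower_tail_general N a b η hη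
end

section
/- Let z be a standard Gaussian random variable and let a, b ∈ ℝ. Then for every λ with 0 ≤ λ ≤ 1/(4|a|) (interpreted as λ ≥ 0 arbitrary when a = 0), one has log E{ exp( λ( a z² + b z − a ) ) } ≤ 2 λ² ( a² + (1/2) b² ). -/
open MeasureTheory ProbabilityTheory Real

lemma my_integral_rexp_quadratic {b : ℝ} (hb : b < 0) (c d : ℝ) :
    ∫ x : ℝ, rexp (b * x ^ 2 + c * x + d)
      = Real.sqrt (π / (-b)) * rexp (d - c ^ 2 / (4 * b)) := by
  have hb' : ((b : ℂ)).re < 0 := by simpa using hb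
  have h := integral_cexp_quadratic hb' (c : ℂ) (d : ℂ)
  have key : ∀ x : ℝ, Complex.exp ((b : ℂ) * x ^ 2 + c * x + d)
      = ((rexp (b * x ^ 2 + c * x + d) : ℝ) : ℂ) := by
    intro x
    rw [Complex.ofReal_exp]
    congr 1
    push_cast
    ring
  simp_rw [key] at h
  rw [show (∫ x : ℝ, ((rexp (b * x ^ 2 + c * x + d) : ℝ) : ℂ))
      = ((∫ x : ℝ, rexp (b * x ^ 2 + c * x + d) : ℝ) : ℂ) from integral_ofReal] at h
  have hr : ((π / -(b:ℂ)) ^ (1 / 2 : ℂ) * Complex.exp ((d:ℂ) - (c:ℂ) ^ 2 / (4 * b)))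
      = ((Real.sqrt (π / (-b)) * rexp (d - c ^ 2 / (4 * b)) : ℝ) : ℂ) := by
    have h1 : ((π : ℂ) / -(b:ℂ)) = ((π / -b : ℝ) : ℂ) := by push_cast; ring
    have h2 : 0 ≤ π / -b := div_nonneg pi_pos.le (by linarith)
    rw [h1, show (1 / 2 : ℂ) = ((1 / 2 : ℝ) : ℂ) by norm_num,
      ← Complex.ofReal_cpow h2, Real.sqrt_eq_rpow]
    push_cast [← Complex.ofReal_exp]
    norm_num
  rw [hr] at h
  exact_mod_cast h

lemma my_gaussian_integral_quad {c : ℝ} (hc : c < 1 / 2) (d : ℝ) :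
    ∫ x, rexp (c * x ^ 2 + d * x) ∂(gaussianReal 0 1)
      = (Real.sqrt (1 - 2 * c))⁻¹ * rexp (d ^ 2 / (2 * (1 - 2 * c))) := by
  have hs : (0 : ℝ) < 1 - 2 * c := by linarith
  rw [gaussianReal_of_var_ne_zero 0 one_ne_zero]
  have hdens : gaussianPDF 0 1
      = fun x => ((Real.toNNReal (gaussianPDFReal 0 1 x) : NNReal) : ENNReal) := rfl
  rw [hdens, integral_withDensity_eq_integral_smul
    ((measurable_gaussianPDFReal 0 1).real_toNNReal)]
  have hint : ∀ x : ℝ, (Real.toNNReal (gaussianPDFReal 0 1 x)) • rexp (c * x ^ 2 + d * x)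
      = (Real.sqrt (2 * π))⁻¹ * rexp ((c - 1 / 2) * x ^ 2 + d * x + 0) := by
    intro x
    rw [NNReal.smul_def, smul_eq_mul,
      Real.coe_toNNReal _ (gaussianPDFReal_nonneg 0 1 x), gaussianPDFReal]
    rw [mul_assoc, ← Real.exp_add]
    push_cast
    rw [mul_one]
    congr 1
    ring
  simp_rw [hint]
  rw [integral_const_mul, my_integral_rexp_quadratic (by linarith) d 0]
  have h0 : (1 - 2 * c) ≠ 0 := ne_of_gt hs
  have h0' : (c - 1 / 2) ≠ 0 := by intro h; apply h0; linarith [sub_eq_zero.mp h]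
  have e1 : (0 : ℝ) - d ^ 2 / (4 * (c - 1 / 2)) = d ^ 2 / (2 * (1 - 2 * c)) := by
    rw [zero_sub, show (2:ℝ) * (1 - 2 * c) = -(4 * (c - 1 / 2)) by ring, div_neg]
  have e2 : Real.sqrt (π / -(c - 1 / 2)) = Real.sqrt (2 * π) * (Real.sqrt (1 - 2 * c))⁻¹ := by
    have : π / -(c - 1 / 2) = 2 * π * (1 - 2 * c)⁻¹ := by
      rw [show -(c - 1 / 2) = (1 - 2 * c) / 2 by ring, div_div_eq_mul_div, div_eq_mul_inv]
      ring
    rw [this, Real.sqrt_mul (by positivity), Real.sqrt_inv]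
  rw [e1, e2]
  have h2π : Real.sqrt (2 * π) ≠ 0 := by positivity
  field_simp

lemma my_neg_log_le {x : ℝ} (h : |x| ≤ 1 / 2) : -Real.log (1 - x) ≤ x + x ^ 2 := by
  obtain ⟨hx2, hx1⟩ := abs_le.mp h
  have hs : (0 : ℝ) < 1 - x := by linarith
  have key : 1 ≤ (1 - x) * Real.exp (x + x ^ 2) := by
    rcases le_or_gt x 0 with hx | hx
    · have h1 := Real.add_one_le_exp (x + x ^ 2)
      nlinarith
    · have ht : 0 ≤ x + x ^ 2 := by nlinarith
      have h1 := Real.quadratic_le_exp_of_nonneg ht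
      nlinarith [sq_nonneg x, sq_nonneg (x + x ^ 2)]
  have h2 : Real.exp (-(x + x ^ 2)) ≤ 1 - x := by
    have hepos := Real.exp_pos (x + x ^ 2)
    have hnpos := Real.exp_pos (-(x + x ^ 2))
    calc Real.exp (-(x + x ^ 2)) = Real.exp (-(x + x ^ 2)) * 1 := by ring
    _ ≤ Real.exp (-(x + x ^ 2)) * ((1 - x) * Real.exp (x + x ^ 2)) := by nlinarith
    _ = 1 - x := by rw [Real.exp_neg]; field_simp
  have := (Real.le_log_iff_exp_le hs).mpr h2
  linarith

/-- Bound on the log-MGF of the centered variable `a z² + b z - a` for `z ~ N(0,1)`: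
for `0 ≤ l` with `4 |a| l ≤ 1` (automatically satisfied for all `l ≥ 0` when `a = 0`),
`log E[exp(l (a z² + b z - a))] ≤ 2 l² (a² + b²/2)`. -/
theorem gaussian_quadratic_logMgf_bound (a b l : ℝ) (hl : 0 ≤ l) (hla : 4 * |a| * l ≤ 1) :
    Real.log (∫ z, Real.exp (l * (a * z ^ 2 + b * z - a)) ∂(gaussianReal 0 1))
      ≤ 2 * l ^ 2 * (a ^ 2 + (1 / 2) * b ^ 2) := by
  have habs : |l * a| ≤ 1 / 4 := by
    rw [abs_mul, abs_of_nonneg hl]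
    nlinarith [abs_nonneg a]
  have hx : |2 * l * a| ≤ 1 / 2 := by
    rw [show 2 * l * a = 2 * (l * a) by ring, abs_mul]
    rw [abs_of_nonneg (by norm_num : (0:ℝ) ≤ 2)]
    linarith
  have hc : l * a < 1 / 2 := lt_of_le_of_lt (le_abs_self _) (by linarith)
  have hs : (0 : ℝ) < 1 - 2 * (l * a) := by
    have := neg_abs_le (2 * l * a)
    nlinarith [abs_le.mp hx]
  rw [show (∫ z, rexp (l * (a * z ^ 2 + b * z - a)) ∂(gaussianReal 0 1))
      = (∫ z, rexp ((l * a) * z ^ 2 + (l * b) * z) ∂(gaussianReal 0 1)) * rexp (-(l * a)) from by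
    rw [← integral_mul_const]
    congr 1
    ext z
    rw [← Real.exp_add]
    congr 1
    ring]
  rw [my_gaussian_integral_quad hc (l * b)]
  have hsq : (0 : ℝ) < Real.sqrt (1 - 2 * (l * a)) := Real.sqrt_pos.mpr hs
  rw [Real.log_mul (by positivity) (Real.exp_ne_zero _),
    Real.log_mul (by positivity) (Real.exp_ne_zero _),
    Real.log_exp, Real.log_exp, Real.log_inv, Real.log_sqrt hs.le]
  -- bound pieces
  set x := 2 * l * a with hxdef
  have hlog : -Real.log (1 - x) ≤ x + x ^ 2 := my_neg_log_le hx
  have hfrac : (l * b) ^ 2 / (2 * (1 - 2 * (l * a))) ≤ (l * b) ^ 2 := by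
    rw [div_le_iff₀ (by linarith)]
    nlinarith [sq_nonneg (l * b), abs_le.mp hx]
  have hxx : 1 - 2 * (l * a) = 1 - x := by rw [hxdef]; ring
  rw [hxx] at hfrac ⊢
  nlinarith [hlog, hfrac]
end
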